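/- Let k11, k12, k21, k22 ∈ M₂(ℝ) be the blocks of an invertible 4×4 matrix k with inverse given by blocks, and let X ∈ M₂(ℝ) be such that k21 X + k22 is invertible. Then det(k21 X + k22)⁻¹ · det(k) = det(k11 − (k11 X + k12)(k21 X + k22)⁻¹ k21). In particular for det(k) = 1, det(k21X+k22)⁻¹ = det(k11 − (k11X+k12)(k21X+k22)⁻¹k21). -/

import Mathlib

open Matrix

/- Right multiplication by the unipotent block matrix `[[1, X], [0, 1]]` does not change the
determinant and turns `k` into `[[k11, k11 X + k12], [k21, k21 X + k22]]`; the Schur complement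
formula with respect to the invertible lower-right block `k21 X + k22` then factors `det k`. -/

namespace Matrix

variable {R m n : Type*} [CommRing R] [Fintype m] [Fintype n] [DecidableEq m] [DecidableEq n]

theorem fromBlocks_mul_fromBlocks_one_zero_one (A : Matrix m m R) (B : Matrix m n R)
    (C : Matrix n m R) (D : Matrix n n R) (X : Matrix m n R) :
    fromBlocks A B C D * fromBlocks 1 X 0 1 = fromBlocks A (A * X + B) C (C * X + D) := by
  simp [fromBlocks_multiply]

theorem det_fromBlocks_eq_det_mul_det_sub_mul_inv_mul (A : Matrix m m R) (B : Matrix m n R)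
    (C : Matrix n m R) (D : Matrix n n R) (X : Matrix m n R) (hX : IsUnit (C * X + D).det) :
    (fromBlocks A B C D).det = (C * X + D).det * (A - (A * X + B) * (C * X + D)⁻¹ * C).det := by
  have := (C * X + D).invertibleOfIsUnitDet hX
  calc (fromBlocks A B C D).det
      = (fromBlocks A B C D * fromBlocks 1 X 0 1).det := by
        rw [det_mul, det_fromBlocks_zero₂₁, det_one, det_one, mul_one, mul_one]
    _ = (fromBlocks A (A * X + B) C (C * X + D)).det := by
        rw [fromBlocks_mul_fromBlocks_one_zero_one]
    _ = (C * X + D).det * (A - (A * X + B) * (C * X + D)⁻¹ * C).det := by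
        rw [det_fromBlocks₂₂, invOf_eq_nonsing_inv]

end Matrix

theorem conformal_factor_identity
    (k11 k12 k21 k22 X : Matrix (Fin 2) (Fin 2) ℝ)
    (hX : IsUnit (k21 * X + k22).det) :
    ((k21 * X + k22).det)⁻¹ * (Matrix.fromBlocks k11 k12 k21 k22).det
      = (k11 - (k11 * X + k12) * (k21 * X + k22)⁻¹ * k21).det ∧
    ((Matrix.fromBlocks k11 k12 k21 k22).det = 1 →
      ((k21 * X + k22).det)⁻¹
        = (k11 - (k11 * X + k12) * (k21 * X + k22)⁻¹ * k21).det) := by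
  have factor := det_fromBlocks_eq_det_mul_det_sub_mul_inv_mul k11 k12 k21 k22 X hX
  have conformal : ((k21 * X + k22).det)⁻¹ * (fromBlocks k11 k12 k21 k22).det
      = (k11 - (k11 * X + k12) * (k21 * X + k22)⁻¹ * k21).det := by
    rw [factor, inv_mul_cancel_left₀ hX.ne_zero]
  refine ⟨conformal, fun hdet => ?_⟩
  rwa [hdet, mul_one] at conformal
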